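/- arXiv:2602.20833 — 3 statements merged into one kernel-verified Lean document; each statement's English description precedes it below -/
import Mathlib

section
/- Per-step bound for the Original-DRESS update: for every finite simple graph G, every symmetric nonnegative function d : V × V → ℝ with ‖u‖_d > 0 for every vertex u, and all vertices u, v, one has F(d)(u,v) ≤ ‖u‖_d/‖v‖_d + ‖v‖_d/‖u‖_d. -/
open Finset

/-- The closed neighborhood `N[u] = N(u) ∪ {u}` of a vertex. -/
def closedNbhd {V : Type*} [Fintype V] [DecidableEq V]
    (G : SimpleGraph V) [DecidableRel G.Adj] (u : V) : Finset V :=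
  insert u (G.neighborFinset u)

/-- The vertex norm `‖u‖_d = sqrt (∑_{x ∈ N[u]} d u x)`. -/
noncomputable def vnorm {V : Type*} [Fintype V] [DecidableEq V]
    (G : SimpleGraph V) [DecidableRel G.Adj] (d : V → V → ℝ) (u : V) : ℝ :=
  Real.sqrt (∑ x ∈ closedNbhd G u, d u x)

/-- The Original-DRESS update operator. -/
noncomputable def dress {V : Type*} [Fintype V] [DecidableEq V]
    (G : SimpleGraph V) [DecidableRel G.Adj] (d : V → V → ℝ) (u v : V) : ℝ :=
  (∑ x ∈ closedNbhd G u ∩ closedNbhd G v, (d u x + d x v)) /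
    (vnorm G d u * vnorm G d v)

/-!
The numerator of `F(d)(u,v)` sums `d u x + d x v` over the common closed neighbourhood, so by
nonnegativity and symmetry it is at most `‖u‖_d² + ‖v‖_d²`; dividing by `‖u‖_d ‖v‖_d` gives
`‖u‖_d/‖v‖_d + ‖v‖_d/‖u‖_d`.
-/

-- Holds even when `a` or `b` is zero, both sides being `0` then.
theorem div_add_div_eq_sq_add_sq_div_mul {K : Type*} [Field K] (a b : K) :
    a / b + b / a = (a ^ 2 + b ^ 2) / (a * b) := by
  rcases eq_or_ne a 0 with rfl | ha
  · simp
  rcases eq_or_ne b 0 with rfl | hb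
  · simp
  field_simp

theorem Finset.sum_inter_add_le_sum_add_sum {ι : Type*} [DecidableEq ι] {s t : Finset ι}
    {f g : ι → ℝ} (hf : ∀ x ∈ s, 0 ≤ f x) (hg : ∀ x ∈ t, 0 ≤ g x) :
    ∑ x ∈ s ∩ t, (f x + g x) ≤ ∑ x ∈ s, f x + ∑ x ∈ t, g x := by
  rw [sum_add_distrib]
  exact add_le_add (sum_le_sum_of_subset_of_nonneg inter_subset_left fun x hx _ => hf x hx)
    (sum_le_sum_of_subset_of_nonneg inter_subset_right fun x hx _ => hg x hx)

theorem vnorm_sq {V : Type*} [Fintype V] [DecidableEq V] (G : SimpleGraph V) [DecidableRel G.Adj]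
    {d : V → V → ℝ} {u : V} (hd : ∀ x, 0 ≤ d u x) :
    vnorm G d u ^ 2 = ∑ x ∈ closedNbhd G u, d u x :=
  Real.sq_sqrt (sum_nonneg fun x _ => hd x)

theorem dress_per_step_bound_general {V : Type*} [Fintype V] [DecidableEq V]
    (G : SimpleGraph V) [DecidableRel G.Adj] (d : V → V → ℝ)
    (hsym : ∀ u v, d u v = d v u)
    (hnonneg : ∀ u v, 0 ≤ d u v)
    (u v : V) :
    dress G d u v ≤ vnorm G d u / vnorm G d v + vnorm G d v / vnorm G d u := by
  have hnum : ∑ x ∈ closedNbhd G u ∩ closedNbhd G v, (d u x + d x v) ≤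
      vnorm G d u ^ 2 + vnorm G d v ^ 2 := by
    rw [vnorm_sq G (hnonneg u), vnorm_sq G (hnonneg v)]
    simp only [hsym _ v]
    exact sum_inter_add_le_sum_add_sum (fun x _ => hnonneg u x) (fun x _ => hnonneg v x)
  rw [dress, div_add_div_eq_sq_add_sq_div_mul]
  exact div_le_div_of_nonneg_right hnum (mul_nonneg (Real.sqrt_nonneg _) (Real.sqrt_nonneg _))

/-- Per-step bound for the Original-DRESS update:
`F(d)(u,v) ≤ ‖u‖_d/‖v‖_d + ‖v‖_d/‖u‖_d`. -/
theorem dress_per_step_bound {V : Type*} [Fintype V] [DecidableEq V]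
    (G : SimpleGraph V) [DecidableRel G.Adj] (d : V → V → ℝ)
    (hsym : ∀ u v, d u v = d v u)
    (hnonneg : ∀ u v, 0 ≤ d u v)
    (hnorm : ∀ u, 0 < vnorm G d u)
    (u v : V) :
    dress G d u v ≤ vnorm G d u / vnorm G d v + vnorm G d v / vnorm G d u :=
  dress_per_step_bound_general G d hsym hnonneg u v
end

section
/- The prism graph admits no edge-constant fixed point of the Original-DRESS update: for the prism graph K_3 □ K_2, there is no real c > 0 such that the symmetric function d with d(u,u) = 2 for all u, d(u,v) = c for all adjacent u ~ v, and d(u,v) = 0 otherwise satisfies F(d)(u,v) = d(u,v) for every adjacent pair u ~ v. -/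
open Finset

/-- The prism graph: the box (Cartesian) product `K_3 □ K_2`. -/
abbrev Prism : SimpleGraph (Fin 3 × Fin 2) :=
  (⊤ : SimpleGraph (Fin 3)) □ (⊤ : SimpleGraph (Fin 2))

noncomputable instance : DecidableRel Prism.Adj := Classical.decRel _

/-- The edge-constant candidate: `2` on the diagonal, `c` on edges, `0`
elsewhere. -/
noncomputable def dConst (c : ℝ) : (Fin 3 × Fin 2) → (Fin 3 × Fin 2) → ℝ :=
  fun u v => if u = v then 2 else if Prism.Adj u v then c else 0

/-! For the edge-constant `d` with parameter `c` on a `k`-regular graph, every vertex norm is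
`sqrt (2 + k c)`, and on an edge `uv` with `λ` common neighbours the numerator of `F(d)(u,v)` is
`(2 + c) + (c + 2) + λ · 2c`. A fixed point with `c > 0` therefore has the same `λ` on every edge.
The prism is `3`-regular, but its triangle edges have one common neighbour and its matching edges
none. -/

namespace SimpleGraph

variable {V : Type*} [DecidableEq V] (G : SimpleGraph V) [DecidableRel G.Adj]

noncomputable def edgeConst (c : ℝ) (u v : V) : ℝ :=
  if u = v then 2 else if G.Adj u v then c else 0

variable {G}

lemma edgeConst_self (c : ℝ) (u : V) : G.edgeConst c u u = 2 := if_pos rfl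

lemma edgeConst_of_adj (c : ℝ) {u v : V} (h : G.Adj u v) : G.edgeConst c u v = c := by
  rw [edgeConst, if_neg h.ne, if_pos h]

variable [Fintype V]

lemma sum_closedNbhd_edgeConst (c : ℝ) (u : V) :
    ∑ x ∈ closedNbhd G u, G.edgeConst c u x = 2 + G.degree u * c := by
  rw [closedNbhd, sum_insert (G.notMem_neighborFinset_self u), edgeConst_self,
    sum_congr rfl fun x hx => edgeConst_of_adj c ((G.mem_neighborFinset u x).1 hx),
    sum_const, card_neighborFinset_eq_degree, nsmul_eq_mul]

lemma closedNbhd_inter_closedNbhd_of_adj {u v : V} (h : G.Adj u v) :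
    closedNbhd G u ∩ closedNbhd G v =
      insert u (insert v (G.neighborFinset u ∩ G.neighborFinset v)) := by
  ext x
  simp only [closedNbhd, mem_inter, mem_insert, mem_neighborFinset]
  constructor
  · rintro ⟨rfl | hux, rfl | hvx⟩ <;> tauto
  · rintro (rfl | rfl | ⟨hux, hvx⟩)
    · exact ⟨Or.inl rfl, Or.inr h.symm⟩
    · exact ⟨Or.inr h, Or.inl rfl⟩
    · exact ⟨Or.inr hux, Or.inr hvx⟩

lemma sum_closedNbhd_inter_edgeConst {u v : V} (c : ℝ) (h : G.Adj u v) :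
    ∑ x ∈ closedNbhd G u ∩ closedNbhd G v, (G.edgeConst c u x + G.edgeConst c x v) =
      4 + 2 * c + #(G.neighborFinset u ∩ G.neighborFinset v) * (2 * c) := by
  have hv : v ∉ G.neighborFinset u ∩ G.neighborFinset v := by simp
  have hu : u ∉ insert v (G.neighborFinset u ∩ G.neighborFinset v) := by simp [h.ne]
  have hcommon : ∀ x ∈ G.neighborFinset u ∩ G.neighborFinset v,
      G.edgeConst c u x + G.edgeConst c x v = 2 * c := fun x hx => by
    rw [mem_inter, mem_neighborFinset, mem_neighborFinset] at hx
    rw [edgeConst_of_adj c hx.1, edgeConst_of_adj c hx.2.symm, two_mul]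
  rw [closedNbhd_inter_closedNbhd_of_adj h, sum_insert hu, sum_insert hv, sum_congr rfl hcommon,
    sum_const, nsmul_eq_mul, edgeConst_self, edgeConst_self, edgeConst_of_adj c h]
  ring

lemma dress_edgeConst_of_isRegularOfDegree {k : ℕ} (hG : G.IsRegularOfDegree k) {c : ℝ}
    (hc : 0 ≤ c) {u v : V} (h : G.Adj u v) :
    dress G (G.edgeConst c) u v =
      (4 + 2 * c + #(G.neighborFinset u ∩ G.neighborFinset v) * (2 * c)) / (2 + k * c) := by
  rw [dress, sum_closedNbhd_inter_edgeConst c h, vnorm, vnorm, sum_closedNbhd_edgeConst,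
    sum_closedNbhd_edgeConst, hG u, hG v, Real.mul_self_sqrt (by positivity)]

lemma card_neighborFinset_inter_eq_of_dress_edgeConst_eq {k : ℕ} (hG : G.IsRegularOfDegree k) {c : ℝ}
    (hc : 0 < c) (hfix : ∀ u v, G.Adj u v → dress G (G.edgeConst c) u v = G.edgeConst c u v)
    {u v u' v' : V} (h : G.Adj u v) (h' : G.Adj u' v') :
    #(G.neighborFinset u ∩ G.neighborFinset v) = #(G.neighborFinset u' ∩ G.neighborFinset v') := by
  have hedge : ∀ {a b : V}, G.Adj a b →
      4 + 2 * c + #(G.neighborFinset a ∩ G.neighborFinset b) * (2 * c) = c * (2 + k * c) := by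
    intro a b hab
    have := hfix a b hab
    rwa [dress_edgeConst_of_isRegularOfDegree hG hc.le hab, edgeConst_of_adj c hab,
      div_eq_iff (by positivity)] at this
  have := (hedge h).trans (hedge h').symm
  exact_mod_cast mul_right_cancel₀ (by positivity : (2 * c) ≠ 0) (add_left_cancel this)

end SimpleGraph

open SimpleGraph

section Prism

-- so that `Prism.neighborFinset` carries the same `Fintype` instance as the one inside `dress`
attribute [-instance] boxProdFintypeNeighborSet

lemma dConst_eq_edgeConst (c : ℝ) : dConst c = Prism.edgeConst c := rfl

lemma prism_isRegularOfDegree : Prism.IsRegularOfDegree 3 := fun x => by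
  rw [degree_boxProd]
  simp

lemma prism_adj {u v : Fin 3 × Fin 2} :
    Prism.Adj u v ↔ (u.1 ≠ v.1 ∧ u.2 = v.2) ∨ (u.1 = v.1 ∧ u.2 ≠ v.2) := by
  simp only [boxProd_adj, top_adj]
  tauto

lemma prism_card_neighborFinset_inter_matching_edge :
    #(Prism.neighborFinset (0, 0) ∩ Prism.neighborFinset (0, 1)) = 0 := by
  rw [card_eq_zero, eq_empty_iff_forall_notMem]
  rintro ⟨a, b⟩
  simp only [mem_inter, mem_neighborFinset, prism_adj]
  fin_cases a <;> fin_cases b <;> decide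

lemma prism_card_neighborFinset_inter_triangle_edge :
    #(Prism.neighborFinset (0, 0) ∩ Prism.neighborFinset (1, 0)) = 1 := by
  rw [card_eq_one]
  refine ⟨(2, 0), ?_⟩
  ext ⟨a, b⟩
  simp only [mem_inter, mem_neighborFinset, prism_adj, mem_singleton]
  fin_cases a <;> fin_cases b <;> decide

end Prism

/-- The prism graph admits no edge-constant fixed point of the Original-DRESS
update. -/
theorem prism_no_edge_constant_fixed_point :
    ¬ ∃ c : ℝ, 0 < c ∧
      ∀ u v, Prism.Adj u v → dress Prism (dConst c) u v = dConst c u v := by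
  rintro ⟨c, hc, hfix⟩
  rw [dConst_eq_edgeConst] at hfix
  have htriangle : Prism.Adj (0, 0) (1, 0) := prism_adj.2 (Or.inl ⟨by decide, rfl⟩)
  have hmatching : Prism.Adj (0, 0) (0, 1) := prism_adj.2 (Or.inr ⟨rfl, by decide⟩)
  have := card_neighborFinset_inter_eq_of_dress_edgeConst_eq prism_isRegularOfDegree hc hfix
    htriangle hmatching
  rw [prism_card_neighborFinset_inter_triangle_edge, prism_card_neighborFinset_inter_matching_edge] at this
  exact one_ne_zero this
end

section
/- Per-step bound for the Motif-DRESS update: for every finite simple graph G, every neighborhood operator 𝒩 assigning to each pair (u,v) a finite set of vertices, every symmetric weight function w : V × V → ℝ that is nonnegative everywhere and zero on every pair (a,b) with b ∉ N[a], and every symmetric nonnegative function d : V × V → ℝ with ‖u‖_{w,d} > 0 for every vertex u, one has F_M(d)(u,v) ≤ ‖u‖_{w,d}/‖v‖_{w,d} + ‖v‖_{w,d}/‖u‖_{w,d} for all vertices u, v. -/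
open Finset

/-- The weighted vertex norm `‖u‖_{w,d} = sqrt (∑_{x ∈ N[u]} w u x * d u x)`. -/
noncomputable def wnorm {V : Type*} [Fintype V] [DecidableEq V]
    (G : SimpleGraph V) [DecidableRel G.Adj] (w d : V → V → ℝ) (u : V) : ℝ :=
  Real.sqrt (∑ x ∈ closedNbhd G u, w u x * d u x)

/-- The Motif-DRESS update operator, for a neighborhood operator `Nb` and a
weight function `w`. -/
noncomputable def motifDress {V : Type*} [Fintype V] [DecidableEq V]
    (G : SimpleGraph V) [DecidableRel G.Adj]
    (Nb : V → V → Finset V) (w d : V → V → ℝ) (u v : V) : ℝ :=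
  (∑ x ∈ Nb u v, (w u x * d u x + w x v * d x v)) /
    (wnorm G w d u * wnorm G w d v)

/-! Every term `w u x * d u x` with `x ∉ N[u]` vanishes, so the numerator of `F_M(d)(u,v)` is
bounded by `‖u‖² + ‖v‖²` whatever the motif neighborhood `𝒩(u,v)` is; it remains to note that
`(a² + b²) / (a b) = a / b + b / a`. -/

theorem Finset.sum_le_sum_of_nonneg_of_eq_zero_of_notMem {ι M : Type*} [DecidableEq ι]
    [AddCommMonoid M] [PartialOrder M] [IsOrderedAddMonoid M] {f : ι → M} (s t : Finset ι)
    (hf : ∀ x ∈ t, 0 ≤ f x) (hzero : ∀ x ∉ t, f x = 0) :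
    ∑ x ∈ s, f x ≤ ∑ x ∈ t, f x :=
  calc ∑ x ∈ s, f x ≤ ∑ x ∈ s ∪ t, f x :=
        sum_le_sum_of_subset_of_nonneg subset_union_left fun x hx hxs =>
          hf x ((mem_union.1 hx).resolve_left hxs)
    _ = ∑ x ∈ t, f x := (sum_subset subset_union_right fun x _ hx => hzero x hx).symm

theorem div_mul_le_div_add_div {a b n : ℝ} (ha : 0 ≤ a) (hb : 0 ≤ b) (hn : n ≤ a ^ 2 + b ^ 2) :
    n / (a * b) ≤ a / b + b / a := by
  rcases ha.eq_or_lt with rfl | ha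
  · simp
  rcases hb.eq_or_lt with rfl | hb
  · simp
  calc n / (a * b) ≤ (a ^ 2 + b ^ 2) / (a * b) := by gcongr
    _ = a / b + b / a := by field_simp

section WeightedNorm

variable {V : Type*} [Fintype V] [DecidableEq V] (G : SimpleGraph V) [DecidableRel G.Adj]
  {w d : V → V → ℝ}

theorem wnorm_sq {u : V} (hwd : ∀ x, 0 ≤ w u x * d u x) :
    wnorm G w d u ^ 2 = ∑ x ∈ closedNbhd G u, w u x * d u x :=
  Real.sq_sqrt (sum_nonneg fun x _ => hwd x)

theorem sum_le_wnorm_sq (s : Finset V) {u : V} (hwd : ∀ x, 0 ≤ w u x * d u x)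
    (hwzero : ∀ x ∉ closedNbhd G u, w u x = 0) :
    ∑ x ∈ s, w u x * d u x ≤ wnorm G w d u ^ 2 := by
  rw [wnorm_sq G hwd]
  exact sum_le_sum_of_nonneg_of_eq_zero_of_notMem s _ (fun x _ => hwd x)
    fun x hx => by rw [hwzero x hx, zero_mul]

end WeightedNorm

theorem motifDress_per_step_bound_general
    {V : Type*} [Fintype V] [DecidableEq V]
    (G : SimpleGraph V) [DecidableRel G.Adj]
    (Nb : V → V → Finset V)
    (w : V → V → ℝ) (hwsym : ∀ a b, w a b = w b a)
    (hwnonneg : ∀ a b, 0 ≤ w a b)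
    (hwzero : ∀ a b, b ∉ closedNbhd G a → w a b = 0)
    (d : V → V → ℝ) (hdsym : ∀ a b, d a b = d b a)
    (hdnonneg : ∀ a b, 0 ≤ d a b)
    (u v : V) :
    motifDress G Nb w d u v ≤
      wnorm G w d u / wnorm G w d v + wnorm G w d v / wnorm G w d u := by
  have hwd a x : 0 ≤ w a x * d a x := mul_nonneg (hwnonneg a x) (hdnonneg a x)
  have hnum : ∑ x ∈ Nb u v, (w u x * d u x + w x v * d x v) ≤
      wnorm G w d u ^ 2 + wnorm G w d v ^ 2 := by
    simp only [sum_add_distrib, hwsym _ v, hdsym _ v]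
    exact add_le_add (sum_le_wnorm_sq G _ (hwd u) (hwzero u))
      (sum_le_wnorm_sq G _ (hwd v) (hwzero v))
  exact div_mul_le_div_add_div (Real.sqrt_nonneg _) (Real.sqrt_nonneg _) hnum

/-- Per-step bound for the Motif-DRESS update:
`F_M(d)(u,v) ≤ ‖u‖_{w,d}/‖v‖_{w,d} + ‖v‖_{w,d}/‖u‖_{w,d}`. -/
theorem motifDress_per_step_bound
    {V : Type*} [Fintype V] [DecidableEq V]
    (G : SimpleGraph V) [DecidableRel G.Adj]
    (Nb : V → V → Finset V)
    (w : V → V → ℝ) (hwsym : ∀ a b, w a b = w b a)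
    (hwnonneg : ∀ a b, 0 ≤ w a b)
    (hwzero : ∀ a b, b ∉ closedNbhd G a → w a b = 0)
    (d : V → V → ℝ) (hdsym : ∀ a b, d a b = d b a)
    (hdnonneg : ∀ a b, 0 ≤ d a b)
    (hnorm : ∀ u, 0 < wnorm G w d u)
    (u v : V) :
    motifDress G Nb w d u v ≤
      wnorm G w d u / wnorm G w d v + wnorm G w d v / wnorm G w d u :=
  motifDress_per_step_bound_general G Nb w hwsym hwnonneg hwzero d hdsym hdnonneg u v
end
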